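/- arXiv:1111.3009 — 3 statements merged into one kernel-verified Lean document; each statement's English description precedes it below -/
import Mathlib

section
/- Let ∇ be a symmetric affine connection on (0,∞)×(0,2π)×(0,π) with coordinates (x¹,x²,x³)=(r,φ,ϑ), whose components satisfy the invariance equation −(∂ξ^i/∂x^m)∇^m_{jk} + (∂ξ^m/∂x^j)∇^i_{mk} + (∂ξ^m/∂x^k)∇^i_{jm} + (∂∇^i_{jk}/∂x^m)ξ^m + ∂²ξ^i/∂x^j∂x^k = 0 for all three rotation generators ξ. Then ∇^1_{12} = ∇^1_{13} = ∇^2_{11} = ∇^2_{22} = ∇^2_{23} = ∇^3_{11} = ∇^3_{22} = ∇^3_{33} = 0, the components ∇^1_{11}, ∇^1_{22}, ∇^2_{12} depend only on r, ∇^1_{33}(r,ϑ) = sin²ϑ · ∇^1_{22}(r), ∇^2_{33}(ϑ) = −sin ϑ cos ϑ, ∇^3_{23}(ϑ) = cot ϑ, ∇^3_{13} = ∇^2_{12}, and there is a function A(r) with ∇^2_{13} = A(r) sin ϑ and ∇^3_{12} = −A(r)/sin ϑ. -/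
/-!
Invariance under `∂/∂φ` says exactly that no component depends on `φ`. The other two generators
are both of the form `(0, a φ, -cot ϑ · b φ)` with `a' = -b` and `b' = a`: `(a, b) = (cos, sin)`
for `λ` and `(a, b) = (-sin, cos)` for `ζ`. The derivatives entering the invariance equation are
then linear in `(a φ, b φ)`, so each of the two equations reads `b φ · E₁ + a φ · E₂ = 0` with
`E₁`, `E₂` independent of the generator; as the two coefficient vectors are related by a rotation,
`E₁ = E₂ = 0` at every point. Using the symmetry of `Γ`, the equations `E₁ = 0` form a solvable
linear system for the components at each point, while `E₂ = 0` gives their `ϑ`-derivatives, in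
particular `∂_ϑ Γ¹₀₂ = cot ϑ · Γ¹₀₂`. So `Γ⁰₀₀`, `Γ⁰₁₁`, `Γ¹₀₁` and `Γ¹₀₂ / sin ϑ` have vanishing
`ϑ`- and `φ`-derivatives, and by the mean value theorem on the convex domain they depend on `r`
alone.
-/

open scoped BigOperators

/-- Partial derivative of a real function on `ℝ³` in the `j`-th coordinate direction. -/
noncomputable def pd (f : (Fin 3 → ℝ) → ℝ) (j : Fin 3) (x : Fin 3 → ℝ) : ℝ :=
  fderiv ℝ f x (Pi.single j 1)

/-- The open box `(0,∞) × (0,π) × (0,2π)` in `(r, ϑ, φ)`-space (coordinates indexed so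
that `x¹ = r`, `x² = ϑ`, `x³ = φ`, following the paper's component labels). -/
def sphDom : Set (Fin 3 → ℝ) :=
  {p | 0 < p 0 ∧ p 1 ∈ Set.Ioo 0 Real.pi ∧ p 2 ∈ Set.Ioo 0 (2 * Real.pi)}

/-- The invariance equation (vanishing Lie derivative) for an affine connection with
components `Γ` along a vector field `ξ`:
`−(∂ξ^i/∂x^m)∇^m_{jk} + (∂ξ^m/∂x^j)∇^i_{mk} + (∂ξ^m/∂x^k)∇^i_{jm}
  + (∂∇^i_{jk}/∂x^m)ξ^m + ∂²ξ^i/∂x^j∂x^k = 0`. -/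
def InvarEq (Γ : (Fin 3 → ℝ) → Fin 3 → Fin 3 → Fin 3 → ℝ)
    (ξ : (Fin 3 → ℝ) → (Fin 3 → ℝ)) : Prop :=
  ∀ p ∈ sphDom, ∀ i j k : Fin 3,
    (-(∑ m, pd (fun q => ξ q i) m p * Γ p m j k))
      + (∑ m, pd (fun q => ξ q m) j p * Γ p i m k)
      + (∑ m, pd (fun q => ξ q m) k p * Γ p i j m)
      + (∑ m, pd (fun q => Γ q i j k) m p * ξ p m)
      + pd (fun q => pd (fun y => ξ y i) k q) j p = 0

open Real Filter Topology

section PartialDerivative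

variable {f g : (Fin 3 → ℝ) → ℝ} {p q : Fin 3 → ℝ}

theorem HasFDerivAt.pd_eq {L : (Fin 3 → ℝ) →L[ℝ] ℝ} (h : HasFDerivAt f L p) (j : Fin 3) :
    pd f j p = L (Pi.single j 1) := by
  rw [pd, h.fderiv]

@[simp]
theorem pd_const (c : ℝ) (j : Fin 3) (p : Fin 3 → ℝ) : pd (fun _ => c) j p = 0 := by
  simp [pd]

theorem Filter.EventuallyEq.pd_eq (h : f =ᶠ[𝓝 p] g) (j : Fin 3) : pd f j p = pd g j p := by
  rw [pd, pd, h.fderiv_eq]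

theorem pd_mul (hf : DifferentiableAt ℝ f p) (hg : DifferentiableAt ℝ g p) (j : Fin 3) :
    pd (fun q => f q * g q) j p = f p * pd g j p + g p * pd f j p := by
  simp [pd, fderiv_fun_mul hf hg]

theorem pd_comp_apply {u : ℝ → ℝ} {u' : ℝ} {l : Fin 3} (hu : HasDerivAt u u' (p l)) (j : Fin 3) :
    pd (fun q => u (q l)) j p = if j = l then u' else 0 := by
  rw [HasFDerivAt.pd_eq (f := fun q => u (q l)) (hu.comp_hasFDerivAt p (hasFDerivAt_apply l p))]
  simp [Pi.single_apply, eq_comm (a := l)]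

theorem HasDerivAt.differentiableAt_comp_apply {u : ℝ → ℝ} {u' : ℝ} {l : Fin 3}
    (hu : HasDerivAt u u' (p l)) : DifferentiableAt ℝ (fun q => u (q l)) p :=
  (hu.comp_hasFDerivAt p (hasFDerivAt_apply l p)).differentiableAt

theorem pd_comp_mul_comp {u v : ℝ → ℝ} {u' v' : ℝ} {l l' : Fin 3} (hu : HasDerivAt u u' (p l))
    (hv : HasDerivAt v v' (p l')) (j : Fin 3) :
    pd (fun q => u (q l) * v (q l')) j p =
      u (p l) * (if j = l' then v' else 0) + v (p l') * (if j = l then u' else 0) := by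
  rw [pd_mul hu.differentiableAt_comp_apply hv.differentiableAt_comp_apply, pd_comp_apply hu,
    pd_comp_apply hv]

theorem fderiv_apply_eq_sum_pd (v : Fin 3 → ℝ) : fderiv ℝ f p v = ∑ i, v i * pd f i p := by
  conv_lhs => rw [pi_eq_sum_univ' v]
  simp [pd, map_sum]

theorem eq_of_pd_eq_zero {s : Set (Fin 3 → ℝ)} (hs : Convex ℝ s)
    (hf : ∀ x ∈ s, DifferentiableAt ℝ f x) (hp : p ∈ s) (hq : q ∈ s)
    (h : ∀ x ∈ s, ∀ i, p i ≠ q i → pd f i x = 0) : f p = f q := by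
  obtain ⟨z, hz, hfz⟩ :=
    domain_mvt (fun x hx => (hf x hx).hasFDerivAt.hasFDerivWithinAt) hs hp hq
  have hzs : z ∈ s := hs.segment_subset hp hq hz
  rw [eq_comm, ← sub_eq_zero, hfz, fderiv_apply_eq_sum_pd]
  refine Finset.sum_eq_zero fun i _ => ?_
  by_cases hi : p i = q i
  · simp [hi]
  · simp [h z hzs i hi]

end PartialDerivative

section SphericalChart

variable {f : (Fin 3 → ℝ) → ℝ} {p : Fin 3 → ℝ} {x : ℝ}

theorem convex_sphDom : Convex ℝ sphDom := by
  let coord (i : Fin 3) : (Fin 3 → ℝ) →ₗ[ℝ] ℝ := LinearMap.proj i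
  exact ((convex_Ioi 0).linear_preimage (coord 0)).inter
    (((convex_Ioo 0 π).linear_preimage (coord 1)).inter
      ((convex_Ioo 0 (2 * π)).linear_preimage (coord 2)))

theorem sin_pos_of_mem_sphDom (hp : p ∈ sphDom) : 0 < sin (p 1) :=
  sin_pos_of_pos_of_lt_pi hp.2.1.1 hp.2.1.2

theorem equator_mem_sphDom (hp : p ∈ sphDom) : ![p 0, π / 2, π / 2] ∈ sphDom := by
  have := pi_pos
  show 0 < p 0 ∧ π / 2 ∈ Set.Ioo 0 π ∧ π / 2 ∈ Set.Ioo 0 (2 * π)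
  exact ⟨hp.1, ⟨by positivity, by linarith⟩, ⟨by positivity, by linarith⟩⟩

theorem eq_equator_of_pd_eq_zero (hf : ∀ x ∈ sphDom, DifferentiableAt ℝ f x)
    (hϑ : ∀ x ∈ sphDom, pd f 1 x = 0) (hφ : ∀ x ∈ sphDom, pd f 2 x = 0) (hp : p ∈ sphDom) :
    f p = f ![p 0, π / 2, π / 2] := by
  refine eq_of_pd_eq_zero convex_sphDom hf hp (equator_mem_sphDom hp) fun x hx i hi => ?_
  fin_cases i
  · exact absurd rfl hi
  · exact hϑ x hx
  · exact hφ x hx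

theorem eventually_sin_ne_zero (hp : sin (p 1) ≠ 0) : ∀ᶠ q in 𝓝 p, sin (q 1) ≠ 0 :=
  (continuous_sin.comp (continuous_apply (A := fun _ : Fin 3 => ℝ) 1)).continuousAt.eventually_ne hp

theorem hasDerivAt_neg_cos_div_sin (hx : sin x ≠ 0) :
    HasDerivAt (fun x => -(cos x / sin x)) (sin x ^ 2)⁻¹ x := by
  refine ((hasDerivAt_cos x).fun_div (hasDerivAt_sin x) hx).fun_neg.congr_deriv ?_
  field_simp
  linear_combination sin_sq_add_cos_sq x

theorem hasDerivAt_inv_sin_sq (hx : sin x ≠ 0) :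
    HasDerivAt (fun x => (sin x ^ 2)⁻¹) (-2 * cos x / sin x ^ 3) x := by
  refine (((hasDerivAt_sin x).fun_pow 2).fun_inv (pow_ne_zero 2 hx)).congr_deriv ?_
  field_simp
  ring

theorem eq_equator_mul_sin_of_pd_eq (hf : ∀ x ∈ sphDom, DifferentiableAt ℝ f x)
    (hϑ : ∀ x ∈ sphDom, pd f 1 x = cos (x 1) / sin (x 1) * f x)
    (hφ : ∀ x ∈ sphDom, pd f 2 x = 0) (hp : p ∈ sphDom) :
    f p = f ![p 0, π / 2, π / 2] * sin (p 1) := by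
  have hinv x (hx : x ∈ sphDom) := (hasDerivAt_sin (x 1)).fun_inv (sin_pos_of_mem_sphDom hx).ne'
  have hquot : ∀ x ∈ sphDom, ∀ j, pd (fun q => f q * (sin (q 1))⁻¹) j x =
      f x * (if j = 1 then -cos (x 1) / sin (x 1) ^ 2 else 0) + (sin (x 1))⁻¹ * pd f j x :=
    fun x hx j => by
      rw [pd_mul (hf x hx) (hinv x hx).differentiableAt_comp_apply, pd_comp_apply (hinv x hx)]
  have hconst := eq_equator_of_pd_eq_zero (f := fun q => f q * (sin (q 1))⁻¹)
    (fun x hx => (hf x hx).mul (hinv x hx).differentiableAt_comp_apply)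
    (fun x hx => by
      rw [hquot x hx, hϑ x hx, if_pos rfl]
      field_simp
      ring)
    (fun x hx => by simp [hquot x hx, hφ x hx]) hp
  simp only [Matrix.cons_val_one, Matrix.cons_val_zero, sin_pi_div_two, inv_one,
    mul_one] at hconst
  rw [← hconst, inv_mul_cancel_right₀ (sin_pos_of_mem_sphDom hp).ne']

end SphericalChart

section InvarianceEquation

variable {Γ : (Fin 3 → ℝ) → Fin 3 → Fin 3 → Fin 3 → ℝ} {ξ : (Fin 3 → ℝ) → Fin 3 → ℝ}
  {p : Fin 3 → ℝ}

noncomputable def jac (ξ : (Fin 3 → ℝ) → Fin 3 → ℝ) (p : Fin 3 → ℝ) : Fin 3 → Fin 3 → ℝ :=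
  fun i m => pd (fun q => ξ q i) m p

noncomputable def hess (ξ : (Fin 3 → ℝ) → Fin 3 → ℝ) (p : Fin 3 → ℝ) : Fin 3 → Fin 3 → Fin 3 → ℝ :=
  fun i j k => pd (fun q => jac ξ q i k) j p

/-- The left-hand side of the invariance equation, with the first and second derivatives and the
value of the vector field at `p` replaced by arbitrary data `J`, `H`, `v`. -/
noncomputable def lieExpr (Γ : (Fin 3 → ℝ) → Fin 3 → Fin 3 → Fin 3 → ℝ) (p : Fin 3 → ℝ)
    (J : Fin 3 → Fin 3 → ℝ) (H : Fin 3 → Fin 3 → Fin 3 → ℝ) (v : Fin 3 → ℝ) (i j k : Fin 3) :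
    ℝ :=
  -(∑ m, J i m * Γ p m j k) + ∑ m, J m j * Γ p i m k + ∑ m, J m k * Γ p i j m
    + ∑ m, pd (fun q => Γ q i j k) m p * v m + H i j k

theorem InvarEq.lieExpr_eq_zero (h : InvarEq Γ ξ) (hp : p ∈ sphDom) (i j k : Fin 3) :
    lieExpr Γ p (jac ξ p) (hess ξ p) (ξ p) i j k = 0 :=
  h p hp i j k

theorem lieExpr_smul_add_smul (c d : ℝ) (J J' : Fin 3 → Fin 3 → ℝ)
    (H H' : Fin 3 → Fin 3 → Fin 3 → ℝ) (v v' : Fin 3 → ℝ) (i j k : Fin 3) :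
    lieExpr Γ p (c • J + d • J') (c • H + d • H') (c • v + d • v') i j k =
      c * lieExpr Γ p J H v i j k + d * lieExpr Γ p J' H' v' i j k := by
  simp only [lieExpr, Pi.add_apply, Pi.smul_apply, smul_eq_mul, Fin.sum_univ_three]
  ring

theorem InvarEq.pd_two_eq_zero (h : InvarEq Γ fun _ => ![0, 0, 1]) (hp : p ∈ sphDom)
    (i j k : Fin 3) : pd (fun q => Γ q i j k) 2 p = 0 := by
  simpa [Fin.sum_univ_three] using h p hp i j k

end InvarianceEquation

section RotationFields

variable {a b : ℝ → ℝ} {p q : Fin 3 → ℝ}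

-- `λ = rotField cos sin` and `ζ = rotField (fun x => -sin x) cos`.
noncomputable def rotField (a b : ℝ → ℝ) (p : Fin 3 → ℝ) : Fin 3 → ℝ :=
  ![0, a (p 2), -(cos (p 1) / sin (p 1)) * b (p 2)]

-- The coefficients of `b φ` (index `₁`) and of `a φ` (index `₂`) in the first and second
-- derivatives and the value of `rotField a b`.
noncomputable def rotJac₁ (ϑ : ℝ) : Fin 3 → Fin 3 → ℝ := ![0, ![0, 0, -1], ![0, (sin ϑ ^ 2)⁻¹, 0]]

noncomputable def rotJac₂ (ϑ : ℝ) : Fin 3 → Fin 3 → ℝ := ![0, 0, ![0, 0, -(cos ϑ / sin ϑ)]]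

noncomputable def rotHess₁ (ϑ : ℝ) : Fin 3 → Fin 3 → Fin 3 → ℝ :=
  ![0, 0, ![0, ![0, -2 * cos ϑ / sin ϑ ^ 3, 0], ![0, 0, cos ϑ / sin ϑ]]]

noncomputable def rotHess₂ (ϑ : ℝ) : Fin 3 → Fin 3 → Fin 3 → ℝ :=
  ![0, ![0, 0, ![0, 0, -1]], ![0, ![0, 0, (sin ϑ ^ 2)⁻¹], ![0, (sin ϑ ^ 2)⁻¹, 0]]]

noncomputable def rotVec₁ (ϑ : ℝ) : Fin 3 → ℝ := ![0, 0, -(cos ϑ / sin ϑ)]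

noncomputable def rotVec₂ : Fin 3 → ℝ := ![0, 1, 0]

theorem jac_rotField (ha : ∀ x, HasDerivAt a (-b x) x) (hb : ∀ x, HasDerivAt b (a x) x)
    (hq : sin (q 1) ≠ 0) :
    jac (rotField a b) q = b (q 2) • rotJac₁ (q 1) + a (q 2) • rotJac₂ (q 1) := by
  ext i m
  fin_cases i
  · simp [jac, rotField, rotJac₁, rotJac₂]
  · simp only [jac, rotField, Fin.reduceFinMk, Matrix.cons_val]
    rw [pd_comp_apply (ha _)]
    fin_cases m <;> simp [rotJac₁, rotJac₂]
  · simp only [jac, rotField, Fin.reduceFinMk, Matrix.cons_val]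
    rw [pd_comp_mul_comp (hasDerivAt_neg_cos_div_sin hq) (hb _)]
    fin_cases m <;> simp [rotJac₁, rotJac₂, mul_comm]

theorem hess_rotField (ha : ∀ x, HasDerivAt a (-b x) x) (hb : ∀ x, HasDerivAt b (a x) x)
    (hp : sin (p 1) ≠ 0) :
    hess (rotField a b) p = b (p 2) • rotHess₁ (p 1) + a (p 2) • rotHess₂ (p 1) := by
  have hjac : ∀ᶠ q in 𝓝 p,
      jac (rotField a b) q = b (q 2) • rotJac₁ (q 1) + a (q 2) • rotJac₂ (q 1) :=
    (eventually_sin_ne_zero hp).mono fun q hq => jac_rotField ha hb hq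
  ext i j k
  have hjac_ik : (fun q => jac (rotField a b) q i k) =ᶠ[𝓝 p]
      fun q => b (q 2) * rotJac₁ (q 1) i k + a (q 2) * rotJac₂ (q 1) i k :=
    hjac.mono fun q hq => congrFun (congrFun hq i) k
  rw [hess, hjac_ik.pd_eq]
  simp only [Pi.add_apply, Pi.smul_apply, smul_eq_mul]
  fin_cases i <;> fin_cases k <;>
    simp only [rotJac₁, rotJac₂, Fin.reduceFinMk, Matrix.cons_val, Pi.zero_apply, mul_zero,
      add_zero, zero_add]
  -- only the entries `(1,2)`, `(2,1)`, `(2,2)` of the Jacobian are non-constant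
  all_goals first
    | rw [pd_const]
    | rw [pd_comp_apply ((hb (p 2)).mul_const (-1))]
    | rw [pd_comp_mul_comp (hb (p 2)) (hasDerivAt_inv_sin_sq hp)]
    | rw [pd_comp_mul_comp (ha (p 2)) (hasDerivAt_neg_cos_div_sin hp)]
  all_goals fin_cases j <;> simp [rotHess₁, rotHess₂, mul_comm]

theorem rotField_apply : rotField a b p = b (p 2) • rotVec₁ (p 1) + a (p 2) • rotVec₂ := by
  ext i
  fin_cases i <;> simp [rotField, rotVec₁, rotVec₂, mul_comm]

theorem InvarEq.lieExpr_rotField_eq_zero {Γ : (Fin 3 → ℝ) → Fin 3 → Fin 3 → Fin 3 → ℝ}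
    (h : InvarEq Γ (rotField a b)) (ha : ∀ x, HasDerivAt a (-b x) x)
    (hb : ∀ x, HasDerivAt b (a x) x) (hp : p ∈ sphDom) (i j k : Fin 3) :
    b (p 2) * lieExpr Γ p (rotJac₁ (p 1)) (rotHess₁ (p 1)) (rotVec₁ (p 1)) i j k
      + a (p 2) * lieExpr Γ p (rotJac₂ (p 1)) (rotHess₂ (p 1)) rotVec₂ i j k = 0 := by
  have hs := (sin_pos_of_mem_sphDom hp).ne'
  rw [← lieExpr_smul_add_smul, ← jac_rotField ha hb hs, ← hess_rotField ha hb hs, ← rotField_apply]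
  exact h.lieExpr_eq_zero hp i j k

theorem lieExpr_rot_eq_zero {Γ : (Fin 3 → ℝ) → Fin 3 → Fin 3 → Fin 3 → ℝ}
    (hlam : InvarEq Γ (rotField cos sin)) (hζ : InvarEq Γ (rotField (fun x => -sin x) cos))
    (hp : p ∈ sphDom) (i j k : Fin 3) :
    lieExpr Γ p (rotJac₁ (p 1)) (rotHess₁ (p 1)) (rotVec₁ (p 1)) i j k = 0 ∧
      lieExpr Γ p (rotJac₂ (p 1)) (rotHess₂ (p 1)) rotVec₂ i j k = 0 := by
  have elam := hlam.lieExpr_rotField_eq_zero hasDerivAt_cos hasDerivAt_sin hp i j k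
  have eζ := hζ.lieExpr_rotField_eq_zero (fun x => (hasDerivAt_sin x).neg) hasDerivAt_cos hp i j k
  set A := lieExpr Γ p (rotJac₁ (p 1)) (rotHess₁ (p 1)) (rotVec₁ (p 1)) i j k
  set B := lieExpr Γ p (rotJac₂ (p 1)) (rotHess₂ (p 1)) rotVec₂ i j k
  have hpy := sin_sq_add_cos_sq (p 2)
  constructor
  · linear_combination sin (p 2) * elam + cos (p 2) * eζ - A * hpy
  · linear_combination cos (p 2) * elam - sin (p 2) * eζ - B * hpy

end RotationFields

section ConnectionComponents

variable {Γ : (Fin 3 → ℝ) → Fin 3 → Fin 3 → Fin 3 → ℝ} {p : Fin 3 → ℝ}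

theorem components_of_lieExpr_rot₁_eq_zero (hsymm : ∀ i j k, Γ p i j k = Γ p i k j)
    (hφ : ∀ i j k, pd (fun q => Γ q i j k) 2 p = 0) (hs : sin (p 1) ≠ 0)
    (h : ∀ i j k, lieExpr Γ p (rotJac₁ (p 1)) (rotHess₁ (p 1)) (rotVec₁ (p 1)) i j k = 0) :
    Γ p 0 0 1 = 0 ∧ Γ p 0 0 2 = 0 ∧ Γ p 1 0 0 = 0 ∧ Γ p 1 1 1 = 0 ∧ Γ p 1 1 2 = 0 ∧
      Γ p 2 0 0 = 0 ∧ Γ p 2 1 1 = 0 ∧ Γ p 2 2 2 = 0 ∧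
      Γ p 0 2 2 = sin (p 1) ^ 2 * Γ p 0 1 1 ∧ Γ p 1 2 2 = -(sin (p 1) * cos (p 1)) ∧
      Γ p 2 1 2 = cos (p 1) / sin (p 1) ∧ Γ p 2 0 2 = Γ p 1 0 1 ∧
      Γ p 2 0 1 = -(Γ p 1 0 2 / sin (p 1) ^ 2) := by
  have e001 := h 0 0 1
  have e002 := h 0 0 2
  have e012 := h 0 1 2
  have e100 := h 1 0 0
  have e101 := h 1 0 1
  have e102 := h 1 0 2
  have e111 := h 1 1 1
  have e112 := h 1 1 2
  have e122 := h 1 2 2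
  have e200 := h 2 0 0
  have e211 := h 2 1 1
  have e212 := h 2 1 2
  have e222 := h 2 2 2
  simp only [lieExpr, rotJac₁, rotHess₁, rotVec₁, Fin.sum_univ_three, Fin.isValue,
    Matrix.cons_val', Pi.zero_apply, Matrix.cons_val_fin_one, Matrix.cons_val_zero,
    Matrix.cons_val_one, Matrix.cons_val, zero_mul, mul_zero, one_mul, Finset.sum_const_zero,
    neg_zero, add_zero, zero_add, mul_neg, neg_mul, neg_neg, neg_eq_zero, mul_eq_zero, inv_eq_zero,
    ne_eq, OfNat.ofNat_ne_zero, not_false_eq_true, pow_eq_zero_iff, false_or, hφ, hs,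
    hsymm 1 2 1, hsymm 2 2 1] at e001 e002 e012 e100 e101 e102 e111 e112 e122 e200 e211 e212 e222
  field_simp at e012 e101 e111 e112 e211 e212 e222
  have h112 : Γ p 1 1 2 = 0 := by linear_combination (e212 - e122 + e111) / 3
  have h211 : Γ p 2 1 1 = 0 := by
    have : sin (p 1) ^ 2 * Γ p 2 1 1 = 0 := by linear_combination e111 - 2 * h112
    simpa [hs] using this
  have hsum : sin (p 1) * (Γ p 1 1 1 + Γ p 2 1 2) = cos (p 1) :=
    mul_left_cancel₀ hs (by linear_combination -e112 - e222)
  have h212 : sin (p 1) * Γ p 2 1 2 = cos (p 1) := by linear_combination (hsum + e211) / 3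
  have h111 : Γ p 1 1 1 = 0 := mul_left_cancel₀ hs (by linear_combination hsum - h212)
  refine ⟨e002, e001, e200, h111, h112, e100, h211, by linear_combination e122 + 2 * h112,
    by linear_combination e012,
    by linear_combination e112 - sin (p 1) * h212 + sin (p 1) ^ 2 * h111,
    by rw [eq_div_iff hs]; linear_combination h212, by linear_combination e102, ?_⟩
  field_simp
  linear_combination e101

theorem pd_one_of_lieExpr_rot₂_eq_zero
    (h : ∀ i j k, lieExpr Γ p (rotJac₂ (p 1)) (rotHess₂ (p 1)) rotVec₂ i j k = 0) :
    pd (fun q => Γ q 0 0 0) 1 p = 0 ∧ pd (fun q => Γ q 0 1 1) 1 p = 0 ∧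
      pd (fun q => Γ q 1 0 1) 1 p = 0 ∧
      pd (fun q => Γ q 1 0 2) 1 p = cos (p 1) / sin (p 1) * Γ p 1 0 2 := by
  have e000 := h 0 0 0
  have e011 := h 0 1 1
  have e101 := h 1 0 1
  have e102 := h 1 0 2
  simp only [lieExpr, rotJac₂, rotHess₂, rotVec₂, Fin.sum_univ_three, Fin.isValue,
    Matrix.cons_val', Pi.zero_apply, Matrix.cons_val_fin_one, Matrix.cons_val_zero,
    Matrix.cons_val_one, Matrix.cons_val, zero_mul, mul_zero, mul_one, Finset.sum_const_zero,
    neg_zero, add_zero, zero_add, neg_mul] at e000 e011 e101 e102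
  exact ⟨e000, e011, e101, by linear_combination e102⟩

end ConnectionComponents

/-- every symmetric affine connection on the spherical-coordinate chart
invariant under all three rotation generators `ξ = ∂/∂φ`,
`ζ = −sin φ ∂/∂ϑ − cot ϑ cos φ ∂/∂φ`, `λ = cos φ ∂/∂ϑ − cot ϑ sin φ ∂/∂φ` has the
components of Lemma 10:  `∇^1_{12} = ∇^1_{13} = ∇^2_{11} = ∇^2_{22} = ∇^2_{23} = ∇^3_{11}
= ∇^3_{22} = ∇^3_{33} = 0`, `∇^1_{11}, ∇^1_{22}, ∇^2_{12}` depend only on `r`,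
`∇^1_{33} = sin²ϑ·∇^1_{22}`, `∇^2_{33} = −sin ϑ cos ϑ`, `∇^3_{23} = cot ϑ`,
`∇^3_{13} = ∇^2_{12}`, and `∇^2_{13} = A(r) sin ϑ`, `∇^3_{12} = −A(r)/sin ϑ` for some
function `A`.  (Indices `0,1,2` correspond to `(r,ϑ,φ)`.) -/
theorem invariant_connection_form
    (Γ : (Fin 3 → ℝ) → Fin 3 → Fin 3 → Fin 3 → ℝ)
    (hsymm : ∀ p ∈ sphDom, ∀ i j k : Fin 3, Γ p i j k = Γ p i k j)
    (hdiff : ∀ i j k, ∀ p ∈ sphDom, DifferentiableAt ℝ (fun q => Γ q i j k) p)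
    (hξ : InvarEq Γ fun _ => ![0, 0, 1])
    (hζ : InvarEq Γ fun p =>
      ![0, -Real.sin (p 2), -(Real.cos (p 1) / Real.sin (p 1)) * Real.cos (p 2)])
    (hlam : InvarEq Γ fun p =>
      ![0, Real.cos (p 2), -(Real.cos (p 1) / Real.sin (p 1)) * Real.sin (p 2)]) :
    ∃ A111 A122 A212 A : ℝ → ℝ, ∀ p ∈ sphDom,
      Γ p 0 0 1 = 0 ∧ Γ p 0 0 2 = 0 ∧ Γ p 1 0 0 = 0 ∧ Γ p 1 1 1 = 0 ∧ Γ p 1 1 2 = 0 ∧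
      Γ p 2 0 0 = 0 ∧ Γ p 2 1 1 = 0 ∧ Γ p 2 2 2 = 0 ∧
      Γ p 0 0 0 = A111 (p 0) ∧ Γ p 0 1 1 = A122 (p 0) ∧ Γ p 1 0 1 = A212 (p 0) ∧
      Γ p 0 2 2 = Real.sin (p 1) ^ 2 * A122 (p 0) ∧
      Γ p 1 2 2 = -(Real.sin (p 1) * Real.cos (p 1)) ∧
      Γ p 2 1 2 = Real.cos (p 1) / Real.sin (p 1) ∧
      Γ p 2 0 2 = A212 (p 0) ∧
      Γ p 1 0 2 = A (p 0) * Real.sin (p 1) ∧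
      Γ p 2 0 1 = -(A (p 0) / Real.sin (p 1)) := by
  have hφ : ∀ p ∈ sphDom, ∀ i j k, pd (fun q => Γ q i j k) 2 p = 0 :=
    fun p hp => hξ.pd_two_eq_zero hp
  have hrot := fun p (hp : p ∈ sphDom) => lieExpr_rot_eq_zero hlam hζ hp
  have hϑ := fun p (hp : p ∈ sphDom) =>
    pd_one_of_lieExpr_rot₂_eq_zero fun i j k => (hrot p hp i j k).2
  have hradial : ∀ i j k, (∀ x ∈ sphDom, pd (fun q => Γ q i j k) 1 x = 0) →
      ∀ p ∈ sphDom, Γ p i j k = Γ ![p 0, π / 2, π / 2] i j k :=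
    fun i j k h p hp => eq_equator_of_pd_eq_zero (hdiff i j k) h (fun x hx => hφ x hx i j k) hp
  refine ⟨fun r => Γ ![r, π / 2, π / 2] 0 0 0, fun r => Γ ![r, π / 2, π / 2] 0 1 1,
    fun r => Γ ![r, π / 2, π / 2] 1 0 1, fun r => Γ ![r, π / 2, π / 2] 1 0 2, fun p hp => ?_⟩
  obtain ⟨h001, h002, h100, h111, h112, h200, h211, h222, h022, h122, h212, h202, h201⟩ :=
    components_of_lieExpr_rot₁_eq_zero (hsymm p hp) (hφ p hp) (sin_pos_of_mem_sphDom hp).ne'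
      fun i j k => (hrot p hp i j k).1
  have h000 := hradial 0 0 0 (fun x hx => (hϑ x hx).1) p hp
  have h011 := hradial 0 1 1 (fun x hx => (hϑ x hx).2.1) p hp
  have h101 := hradial 1 0 1 (fun x hx => (hϑ x hx).2.2.1) p hp
  have h102 := eq_equator_mul_sin_of_pd_eq (hdiff 1 0 2) (fun x hx => (hϑ x hx).2.2.2)
    (fun x hx => hφ x hx 1 0 2) hp
  refine ⟨h001, h002, h100, h111, h112, h200, h211, h222, h000, h011, h101, by rw [h022, h011],
    h122, h212, h202.trans h101, h102, ?_⟩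
  rw [h201, h102]
  field_simp
end

section
/- Let ∇ be a connection on (0,∞)×(0,2π)×(0,π) in coordinates (r,φ,ϑ) whose nonzero components are ∇^1_{11} = A¹₁₁(r), ∇^2_{12} = ∇^3_{13} = A²₁₂(r), ∇^1_{22} = −(L/K)A²₁₂(r)exp(2∫₁^r(A²₁₂−A¹₁₁)), ∇^1_{33} = sin²ϑ·∇^1_{22}, ∇^2_{33} = −sin ϑ cos ϑ, ∇^3_{23} = cot ϑ, where K,L are nonzero reals and A¹₁₁, A²₁₂ are continuous. Then the metric g = P(r)dr⊗dr + Q(r)(dϑ⊗dϑ + sin²ϑ dφ⊗dφ) with P(r) = K exp(2∫₁^r A¹₁₁), Q(r) = L exp(2∫₁^r A²₁₂) satisfies the metrizability equations ∂g_{ij}/∂x^k = g_{im}∇^m_{jk} + g_{jm}∇^m_{ik} for all i,j,k. -/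
open scoped BigOperators

/-- The connection of Theorem 11: nonzero components `∇^1_{11} = A¹₁₁(r)`,
`∇^2_{12} = ∇^3_{13} = A²₁₂(r)`, `∇^1_{22} = −(L/K)A²₁₂(r)exp(2∫₁^r(A²₁₂−A¹₁₁))`,
`∇^1_{33} = sin²ϑ·∇^1_{22}`, `∇^2_{33} = −sin ϑ cos ϑ`, `∇^3_{23} = cot ϑ`
(together with their symmetric counterparts in the lower indices). -/
noncomputable def metrConn (A111 A212 : ℝ → ℝ) (K L : ℝ)
    (p : Fin 3 → ℝ) (i : Fin 3) : Matrix (Fin 3) (Fin 3) ℝ :=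
  let N : ℝ := -(L / K) * A212 (p 0) *
    Real.exp (2 * ∫ t in (1:ℝ)..(p 0), (A212 t - A111 t))
  ![!![A111 (p 0), 0, 0; 0, N, 0; 0, 0, Real.sin (p 1) ^ 2 * N],
    !![0, A212 (p 0), 0; A212 (p 0), 0, 0; 0, 0, -(Real.sin (p 1) * Real.cos (p 1))],
    !![0, 0, A212 (p 0); 0, 0, Real.cos (p 1) / Real.sin (p 1);
       A212 (p 0), Real.cos (p 1) / Real.sin (p 1), 0]] i

/-- The metric `g = P(r) dr⊗dr + Q(r)(dϑ⊗dϑ + sin²ϑ dφ⊗dφ)` of Theorem 12, with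
`P(r) = K exp(2∫₁^r A¹₁₁)` and `Q(r) = L exp(2∫₁^r A²₁₂)`. -/
noncomputable def metrG (A111 A212 : ℝ → ℝ) (K L : ℝ)
    (p : Fin 3 → ℝ) : Matrix (Fin 3) (Fin 3) ℝ :=
  Matrix.diagonal
    ![K * Real.exp (2 * ∫ t in (1:ℝ)..(p 0), A111 t),
      L * Real.exp (2 * ∫ t in (1:ℝ)..(p 0), A212 t),
      (L * Real.exp (2 * ∫ t in (1:ℝ)..(p 0), A212 t)) * Real.sin (p 1) ^ 2]

/-!
The metric is diagonal and its entries depend only on `r` and `ϑ`. By the fundamental theorem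
of calculus `P' = 2 A¹₁₁ P` and `Q' = 2 A²₁₂ Q`, while `(sin² ϑ)' = 2 sin ϑ cos ϑ`; and
`Q / P = (L / K) exp (2 ∫₁^r (A²₁₂ - A¹₁₁))`, i.e. `∇¹₂₂ = -A²₁₂ Q / P`. With these four facts
each of the 27 metrizability equations becomes a rational identity in `P`, `Q`, `sin ϑ`, `cos ϑ`.
-/

open Real

section PartialDerivative

variable {x : Fin 3 → ℝ} {f g : ℝ → ℝ} {f' g' : ℝ} {a b k : Fin 3}

theorem hasFDerivAt_comp_apply (hf : HasDerivAt f f' (x a)) :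
    HasFDerivAt (fun q : Fin 3 → ℝ => f (q a))
      (f' • ContinuousLinearMap.proj (R := ℝ) (φ := fun _ : Fin 3 => ℝ) a) x :=
  hf.comp_hasFDerivAt x (hasFDerivAt_apply a x)

theorem pd_comp_apply_s13 (hf : HasDerivAt f f' (x a)) :
    pd (fun q => f (q a)) k x = f' * (Pi.single k 1 : Fin 3 → ℝ) a := by
  simp [pd, (hasFDerivAt_comp_apply hf).fderiv]

theorem pd_comp_apply_mul_comp_apply (hf : HasDerivAt f f' (x a)) (hg : HasDerivAt g g' (x b)) :
    pd (fun q => f (q a) * g (q b)) k x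
      = f' * g (x b) * (Pi.single k 1 : Fin 3 → ℝ) a
        + f (x a) * g' * (Pi.single k 1 : Fin 3 → ℝ) b := by
  have h : HasFDerivAt (fun q : Fin 3 → ℝ => f (q a) * g (q b)) _ x :=
    (hasFDerivAt_comp_apply hf).mul (hasFDerivAt_comp_apply hg)
  rw [pd, h.fderiv]
  simp only [_root_.add_apply, _root_.smul_apply, ContinuousLinearMap.proj_apply, smul_eq_mul]
  ring

theorem pd_diagonal_apply (d : (Fin 3 → ℝ) → Fin 3 → ℝ) (i j : Fin 3) :
    pd (fun q => Matrix.diagonal (d q) i j) k x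
      = if i = j then pd (fun q => d q i) k x else 0 := by
  by_cases h : i = j
  · subst h; simp
  · simp [h, pd]

end PartialDerivative

theorem ContinuousOn.hasDerivAt_integral {A : ℝ → ℝ} {s : Set ℝ} (hA : ContinuousOn A s)
    (hs : IsOpen s) (hs' : s.OrdConnected) {a r : ℝ} (ha : a ∈ s) (hr : r ∈ s) :
    HasDerivAt (fun x => ∫ t in a..x, A t) (A r) r :=
  intervalIntegral.integral_hasDerivAt_right
    ((hA.mono (hs'.uIcc_subset ha hr)).intervalIntegrable)
    (hA.stronglyMeasurableAtFilter hs r hr) (hA.continuousAt (hs.mem_nhds hr))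

/-- The radial coefficients `P = expIntegral K A¹₁₁` and `Q = expIntegral L A²₁₂` of the metric. -/
noncomputable def expIntegral (C : ℝ) (A : ℝ → ℝ) (r : ℝ) : ℝ :=
  C * exp (2 * ∫ t in (1:ℝ)..r, A t)

theorem hasDerivAt_expIntegral (C : ℝ) {A : ℝ → ℝ} {r : ℝ} (hA : ContinuousOn A (Set.Ioi 0))
    (hr : 0 < r) : HasDerivAt (expIntegral C A) (2 * A r * expIntegral C A r) r := by
  have hI := hA.hasDerivAt_integral isOpen_Ioi Set.ordConnected_Ioi (Set.mem_Ioi.2 one_pos) hr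
  exact (((hI.const_mul 2).exp).const_mul C).congr_deriv (by unfold expIntegral; ring)

theorem expIntegral_ne_zero {C : ℝ} (hC : C ≠ 0) (A : ℝ → ℝ) (r : ℝ) : expIntegral C A r ≠ 0 :=
  mul_ne_zero hC (exp_pos _).ne'

theorem div_mul_exp_integral_sub {K : ℝ} (hK : K ≠ 0) (L : ℝ) {A B : ℝ → ℝ} {r : ℝ}
    (hA : IntervalIntegrable A MeasureTheory.volume 1 r)
    (hB : IntervalIntegrable B MeasureTheory.volume 1 r) :
    L / K * exp (2 * ∫ t in (1:ℝ)..r, (B t - A t)) = expIntegral L B r / expIntegral K A r := by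
  rw [eq_div_iff (expIntegral_ne_zero hK A r), expIntegral, expIntegral,
    intervalIntegral.integral_sub hB hA]
  field_simp
  rw [mul_assoc, ← exp_add]
  ring_nf

theorem metrG_eq (A111 A212 : ℝ → ℝ) (K L : ℝ) (q : Fin 3 → ℝ) :
    metrG A111 A212 K L q = Matrix.diagonal
      ![expIntegral K A111 (q 0), expIntegral L A212 (q 0),
        expIntegral L A212 (q 0) * sin (q 1) ^ 2] := rfl

theorem metrizability_equations_hold_general
    (A111 A212 : ℝ → ℝ)
    (h1 : ContinuousOn A111 (Set.Ioi 0)) (h2 : ContinuousOn A212 (Set.Ioi 0))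
    (K L : ℝ) (hK : K ≠ 0) :
    ∀ p ∈ sphDom, ∀ i j k : Fin 3,
      pd (fun q => metrG A111 A212 K L q i j) k p
        = (∑ m, metrG A111 A212 K L p i m * metrConn A111 A212 K L p m j k)
          + (∑ m, metrG A111 A212 K L p j m * metrConn A111 A212 K L p m i k) := by
  rintro p ⟨hr, hϑ, -⟩ i j k
  have hsin : sin (p 1) ≠ 0 := (sin_pos_of_pos_of_lt_pi hϑ.1 hϑ.2).ne'
  have hP := hasDerivAt_expIntegral K h1 hr
  have hQ := hasDerivAt_expIntegral L h2 hr
  have hsin2 : HasDerivAt (fun θ => sin θ ^ 2) (2 * sin (p 1) * cos (p 1)) (p 1) :=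
    ((hasDerivAt_sin _).pow 2).congr_deriv (by ring)
  have hint {A : ℝ → ℝ} (hA : ContinuousOn A (Set.Ioi 0)) :
      IntervalIntegrable A MeasureTheory.volume 1 (p 0) :=
    (hA.mono (Set.ordConnected_Ioi.uIcc_subset (Set.mem_Ioi.2 one_pos) hr)).intervalIntegrable
  have hN : -(L / K) * A212 (p 0) * exp (2 * ∫ t in (1:ℝ)..p 0, (A212 t - A111 t))
      = -(A212 (p 0) * expIntegral L A212 (p 0)) / expIntegral K A111 (p 0) := by
    rw [neg_div, mul_div_assoc, ← div_mul_exp_integral_sub hK L (hint h1) (hint h2)]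
    ring
  have hP0 := expIntegral_ne_zero hK A111 (p 0)
  simp only [metrG_eq, pd_diagonal_apply, metrConn, hN]
  fin_cases i <;> fin_cases j <;> fin_cases k <;>
    simp only [pd_comp_apply_s13 hP, pd_comp_apply_s13 hQ, pd_comp_apply_mul_comp_apply hQ hsin2,
      Fin.sum_univ_three, Fin.zero_eta, Fin.mk_one, Fin.reduceFinMk, Fin.isValue, Fin.reduceEq,
      Nat.succ_eq_add_one, Nat.reduceAdd, ne_eq, ↓reduceIte, zero_ne_one, one_ne_zero,
      not_false_eq_true, Matrix.of_apply, Matrix.cons_val', Matrix.cons_val, Matrix.cons_val_zero,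
      Matrix.cons_val_one, Matrix.cons_val_fin_one, Matrix.diagonal_apply_eq,
      Matrix.diagonal_apply_ne, Pi.single_eq_same, Pi.single_eq_of_ne, mul_one, mul_zero, zero_mul,
      add_zero, zero_add, mul_neg, neg_zero] <;>
    field_simp <;> ring

/-- the connection of Theorem 11 is metrized by the metric of Theorem 12:
the metrizability equations `∂g_{ij}/∂x^k = g_{im}∇^m_{jk} + g_{jm}∇^m_{ik}` hold. -/
theorem metrizability_equations_hold
    (A111 A212 : ℝ → ℝ)
    (h1 : ContinuousOn A111 (Set.Ioi 0)) (h2 : ContinuousOn A212 (Set.Ioi 0))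
    (K L : ℝ) (hK : K ≠ 0) (hL : L ≠ 0) :
    ∀ p ∈ sphDom, ∀ i j k : Fin 3,
      pd (fun q => metrG A111 A212 K L q i j) k p
        = (∑ m, metrG A111 A212 K L p i m * metrConn A111 A212 K L p m j k)
          + (∑ m, metrG A111 A212 K L p j m * metrConn A111 A212 K L p m i k) :=
  metrizability_equations_hold_general A111 A212 h1 h2 K L hK
end

section
/- Suppose an SO(3)-invariant connection ∇ with components as in Lemma 10 (depending on functions A¹₁₁(r), A¹₂₂(r), A²₁₂(r), A(r)) is metrizable by an SO(3)-invariant metric g = P(r)dr⊗dr + Q(r)(dϑ⊗dϑ + sin²ϑ dφ⊗dφ). Then A = 0 and A¹₂₂ = −(Q/P)·A²₁₂ where P'/(2P) = A¹₁₁ and Q'/(2Q) = A²₁₂. -/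
open scoped BigOperators

/-- The `SO(3)`-invariant connection of Lemma 10, depending on the functions
`A¹₁₁(r), A¹₂₂(r), A²₁₂(r), A(r)`:  `∇^1_{11}=A¹₁₁`, `∇^1_{22}=A¹₂₂`,
`∇^1_{33}=sin²ϑ·A¹₂₂`, `∇^2_{12}=∇^3_{13}=A²₁₂`, `∇^2_{13}=A sin ϑ`,
`∇^3_{12}=−A/sin ϑ`, `∇^2_{33}=−sin ϑ cos ϑ`, `∇^3_{23}=cot ϑ`, others zero. -/
noncomputable def invConn (A111 A122 A212 A : ℝ → ℝ)
    (p : Fin 3 → ℝ) (i : Fin 3) : Matrix (Fin 3) (Fin 3) ℝ :=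
  ![!![A111 (p 0), 0, 0; 0, A122 (p 0), 0; 0, 0, Real.sin (p 1) ^ 2 * A122 (p 0)],
    !![0, A212 (p 0), A (p 0) * Real.sin (p 1);
       A212 (p 0), 0, 0;
       A (p 0) * Real.sin (p 1), 0, -(Real.sin (p 1) * Real.cos (p 1))],
    !![0, -(A (p 0) / Real.sin (p 1)), A212 (p 0);
       -(A (p 0) / Real.sin (p 1)), 0, Real.cos (p 1) / Real.sin (p 1);
       A212 (p 0), Real.cos (p 1) / Real.sin (p 1), 0]] i

/-- Components of the `SO(3)`-invariant metric
`g = P(r) dr⊗dr + Q(r)(dϑ⊗dϑ + sin²ϑ dφ⊗dφ)`. -/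
noncomputable def invMetric (P Q : ℝ → ℝ) (p : Fin 3 → ℝ) : Matrix (Fin 3) (Fin 3) ℝ :=
  Matrix.diagonal ![P (p 0), Q (p 0), Q (p 0) * Real.sin (p 1) ^ 2]

lemma pd_proj0 (f : ℝ → ℝ) (p : Fin 3 → ℝ) (hf : DifferentiableAt ℝ f (p 0)) :
    fderiv ℝ (fun q : Fin 3 → ℝ => f (q 0)) p (Pi.single 0 1) = deriv f (p 0) := by
  have hproj : HasFDerivAt (fun q : Fin 3 → ℝ => q 0)
      (ContinuousLinearMap.proj 0 : (Fin 3 → ℝ) →L[ℝ] ℝ) p :=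
    (ContinuousLinearMap.proj 0 : (Fin 3 → ℝ) →L[ℝ] ℝ).hasFDerivAt
  have h : HasFDerivAt (fun q : Fin 3 → ℝ => f (q 0))
      ((ContinuousLinearMap.smulRight (1 : ℝ →L[ℝ] ℝ) (deriv f (p 0))).comp
        (ContinuousLinearMap.proj 0 : (Fin 3 → ℝ) →L[ℝ] ℝ)) p :=
    (hf.hasDerivAt.hasFDerivAt).comp p hproj
  rw [h.fderiv]
  simp


/-- if the `SO(3)`-invariant connection of Lemma 10 is metrized by an
`SO(3)`-invariant metric `g = P dr⊗dr + Q(dϑ⊗dϑ + sin²ϑ dφ⊗dφ)` (with `P, Q` smooth and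
nowhere zero), then `A = 0`, `A¹₂₂ = −(Q/P)·A²₁₂`, `P'/(2P) = A¹₁₁` and
`Q'/(2Q) = A²₁₂`. -/
theorem metrizable_invariant_connection_conditions
    (A111 A122 A212 A : ℝ → ℝ) (P Q : ℝ → ℝ)
    (hP : ContDiffOn ℝ (⊤ : ℕ∞) P (Set.Ioi 0)) (hQ : ContDiffOn ℝ (⊤ : ℕ∞) Q (Set.Ioi 0))
    (hP0 : ∀ r, 0 < r → P r ≠ 0) (hQ0 : ∀ r, 0 < r → Q r ≠ 0)
    (hmetr : ∀ p ∈ sphDom, ∀ i j k : Fin 3,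
      pd (fun q => invMetric P Q q i j) k p
        = (∑ m, invMetric P Q p i m * invConn A111 A122 A212 A p m j k)
          + (∑ m, invMetric P Q p j m * invConn A111 A122 A212 A p m i k)) :
    ∀ r, 0 < r →
      A r = 0 ∧
      A122 r = -(Q r / P r) * A212 r ∧
      deriv P r / (2 * P r) = A111 r ∧
      deriv Q r / (2 * Q r) = A212 r := by
  intro r hr
  set p : Fin 3 → ℝ := ![r, Real.pi / 2, Real.pi] with hpdef
  have hp0 : p 0 = r := rfl
  have hp1 : p 1 = Real.pi / 2 := rfl
  have hpi := Real.pi_pos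
  have hp2 : p 2 = Real.pi := rfl
  have hp : p ∈ sphDom :=
    ⟨hr, by rw [hp1]; constructor <;> linarith, by rw [hp2]; constructor <;> linarith⟩
  have hPr := hP0 r hr
  have hQr := hQ0 r hr
  have hdP : DifferentiableAt ℝ P r :=
    (hP.contDiffAt (isOpen_Ioi.mem_nhds hr)).differentiableAt (by simp)
  have hdQ : DifferentiableAt ℝ Q r :=
    (hQ.contDiffAt (isOpen_Ioi.mem_nhds hr)).differentiableAt (by simp)
  -- equation for A : i=0, j=2, k=1
  have eA := hmetr p hp 0 2 1
  have hfun02 : (fun q => invMetric P Q q 0 2) = fun _ => (0 : ℝ) := by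
    funext q; simp [invMetric, Matrix.diagonal]
  rw [hfun02] at eA
  simp only [pd, fderiv_const, Pi.zero_apply, ContinuousLinearMap.zero_apply] at eA
  simp [invMetric, invConn, Fin.sum_univ_three, Matrix.diagonal, hp0, hp1,
    Real.sin_pi_div_two, Real.cos_pi_div_two] at eA
  have hA : A r = 0 := by
    rcases eA with h | h
    · exact absurd h hQr
    · exact h
  -- equation for A122 : i=0, j=1, k=1
  have eB := hmetr p hp 0 1 1
  have hfun01 : (fun q => invMetric P Q q 0 1) = fun _ => (0 : ℝ) := by
    funext q; simp [invMetric, Matrix.diagonal]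
  rw [hfun01] at eB
  simp only [pd, fderiv_const, Pi.zero_apply, ContinuousLinearMap.zero_apply] at eB
  simp [invMetric, invConn, Fin.sum_univ_three, Matrix.diagonal, hp0, hp1,
    Real.sin_pi_div_two, Real.cos_pi_div_two] at eB
  -- equation for P' : i=0, j=0, k=0
  have eP := hmetr p hp 0 0 0
  have hfun00 : (fun q => invMetric P Q q 0 0) = fun q => P (q 0) := by
    funext q; simp [invMetric, Matrix.diagonal]
  rw [hfun00] at eP
  rw [show pd (fun q => P (q 0)) 0 p = deriv P (p 0) from pd_proj0 P p (hp0 ▸ hdP)] at eP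
  simp [invMetric, invConn, Fin.sum_univ_three, Matrix.diagonal, hp0, hp1,
    Real.sin_pi_div_two, Real.cos_pi_div_two] at eP
  -- equation for Q' : i=1, j=1, k=0
  have eQ := hmetr p hp 1 1 0
  have hfun11 : (fun q => invMetric P Q q 1 1) = fun q => Q (q 0) := by
    funext q; simp [invMetric, Matrix.diagonal]
  rw [hfun11] at eQ
  rw [show pd (fun q => Q (q 0)) 0 p = deriv Q (p 0) from pd_proj0 Q p (hp0 ▸ hdQ)] at eQ
  simp [invMetric, invConn, Fin.sum_univ_three, Matrix.diagonal, hp0, hp1,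
    Real.sin_pi_div_two, Real.cos_pi_div_two] at eQ
  refine ⟨hA, ?_, ?_, ?_⟩
  · field_simp
    linarith
  · rw [eP]; field_simp; ring
  · rw [eQ]; field_simp; ring
end
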